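/- arXiv:1802.04950 — 8 statements merged into one kernel-verified Lean document; each statement's English description precedes it below -/
import Mathlib

section
/- Let A ∈ 𝒫^a_ℝ, B ∈ 𝒫^b_ℝ, C ∈ 𝒫^c_ℝ (real polynomials in the sense q_i = conj(q_{k-i})), and suppose (X, Y) is a pair of complex polynomials with A·X − B·Y = C and deg X ≤ c − a. Then there exists a solution (X₀, Y₀) to A·X₀ − B·Y₀ = C with X₀ ∈ 𝒫^{c−a}_ℝ and Y₀ ∈ 𝒫^{c−b}_ℝ. -/
/-!
Reflecting a polynomial of degree `≤ k` and conjugating its coefficients is a conjugate-linear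
involution `ρ_k` whose fixed points are exactly `𝒫^k_ℝ`, and `ρ_{m+n} (p q) = ρ_m p · ρ_n q`.
Applying `ρ_c` to `A X − B Y = C` and using `ρ_a A = A`, `ρ_b B = B`, `ρ_c C = C` shows that
`(ρ_{c−a} X, ρ_{c−b} Y)` is again a solution (the bound `deg Y ≤ c − b` follows from
`deg (B Y) ≤ c`). The average of the two solutions is a solution fixed by the involutions.
-/

open Polynomial

/-- `PR k q` : `q` is a "real" polynomial of degree at most `k`,
meaning `q_i = conj q_{k-i}` for all `0 ≤ i ≤ k`. -/
def PR (k : ℕ) (q : Polynomial ℂ) : Prop :=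
  q.degree ≤ (k : ℕ) ∧ ∀ i ≤ k, q.coeff i = (starRingEnd ℂ) (q.coeff (k - i))

section CommSemiring

variable {R : Type*} [CommSemiring R] [StarRing R]

/-- The reality involution `ρ_k^*` of the paper, `q ↦ Xᵏ · conj (q (1 / conj X))` on
polynomials of degree at most `k`. -/
noncomputable def conjReflect (k : ℕ) (q : R[X]) : R[X] :=
  (q.reflect k).map (starRingEnd R)

@[simp]
lemma coeff_conjReflect (k : ℕ) (q : R[X]) (i : ℕ) :
    (conjReflect k q).coeff i = star (q.coeff (revAt k i)) := by
  simp [conjReflect, coeff_reflect, starRingEnd_apply]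

@[simp]
lemma conjReflect_conjReflect (k : ℕ) (q : R[X]) : conjReflect k (conjReflect k q) = q := by
  ext i
  simp [revAt_invol]

lemma conjReflect_add (k : ℕ) (p q : R[X]) :
    conjReflect k (p + q) = conjReflect k p + conjReflect k q := by
  ext i
  simp

lemma conjReflect_C_mul (k : ℕ) (r : R) (q : R[X]) :
    conjReflect k (C r * q) = C (star r) * conjReflect k q := by
  ext i
  simp [mul_comm]

lemma natDegree_conjReflect_le {k : ℕ} {q : R[X]} (hq : q.natDegree ≤ k) :
    (conjReflect k q).natDegree ≤ k := by
  rw [natDegree_le_iff_coeff_eq_zero]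
  intro i hi
  have hki : k < i := by exact_mod_cast hi
  simp [revAt_eq_self_of_lt hki, coeff_eq_zero_of_natDegree_lt (hq.trans_lt hki)]

lemma conjReflect_mul_of_add_eq {m n k : ℕ} (hk : m + n = k) {p q : R[X]}
    (hp : p.natDegree ≤ m) (hq : q.natDegree ≤ n) :
    conjReflect k (p * q) = conjReflect m p * conjReflect n q := by
  rw [conjReflect, conjReflect, conjReflect, ← hk, reflect_mul p q hp hq, Polynomial.map_mul]

end CommSemiring

section CommRing

variable {R : Type*} [CommRing R] [StarRing R]

lemma conjReflect_sub (k : ℕ) (p q : R[X]) :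
    conjReflect k (p - q) = conjReflect k p - conjReflect k q := by
  ext i
  simp

lemma mul_conjReflect_sub_mul_conjReflect {a b c : ℕ} (hac : a ≤ c) (hbc : b ≤ c)
    {A B D X Y : R[X]}
    (hA : A.natDegree ≤ a) (hAfix : conjReflect a A = A)
    (hB : B.natDegree ≤ b) (hBfix : conjReflect b B = B) (hDfix : conjReflect c D = D)
    (hX : X.natDegree ≤ c - a) (hY : Y.natDegree ≤ c - b) (h : A * X - B * Y = D) :
    A * conjReflect (c - a) X - B * conjReflect (c - b) Y = D := by
  calc A * conjReflect (c - a) X - B * conjReflect (c - b) Y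
      = conjReflect a A * conjReflect (c - a) X - conjReflect b B * conjReflect (c - b) Y := by
        rw [hAfix, hBfix]
    _ = conjReflect c (A * X - B * Y) := by
        rw [conjReflect_sub, conjReflect_mul_of_add_eq (by omega) hA hX,
          conjReflect_mul_of_add_eq (by omega) hB hY]
    _ = D := by rw [h, hDfix]

end CommRing

lemma natDegree_le_sub_of_natDegree_mul_le {R : Type*} [Semiring R] [NoZeroDivisors R]
    {p q : R[X]} {n : ℕ} (hp : p ≠ 0) (h : (p * q).natDegree ≤ n) :
    q.natDegree ≤ n - p.natDegree := by
  rcases eq_or_ne q 0 with rfl | hq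
  · simp
  · rw [natDegree_mul hp hq] at h
    omega

lemma PR_iff_conjReflect_eq {k : ℕ} {q : ℂ[X]} :
    PR k q ↔ q.natDegree ≤ k ∧ conjReflect k q = q := by
  rw [PR, natDegree_le_iff_degree_le]
  refine and_congr_right fun hq => ⟨fun hcoeff => ?_, fun hfix i hi => ?_⟩
  · ext i
    rcases le_or_gt i k with hi | hi
    · simp [revAt_le hi, hcoeff i hi]
    · have hqi : q.degree < i := hq.trans_lt (by exact_mod_cast hi)
      simp [revAt_eq_self_of_lt hi, coeff_eq_zero_of_degree_lt hqi]
  · conv_lhs => rw [← hfix]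
    rw [coeff_conjReflect, revAt_le hi, starRingEnd_apply]

lemma PR_half_add_conjReflect {k : ℕ} {q : ℂ[X]} (hq : q.natDegree ≤ k) :
    PR k (C (1 / 2) * (q + conjReflect k q)) := by
  refine PR_iff_conjReflect_eq.2 ⟨?_, ?_⟩
  · exact (natDegree_C_mul_le _ _).trans
      ((natDegree_add_le _ _).trans (max_le hq (natDegree_conjReflect_le hq)))
  · rw [conjReflect_C_mul, conjReflect_add, conjReflect_conjReflect, add_comm]
    simp

theorem bezout_real_solution_general (a b c : ℕ) (hac : a ≤ c) (hbc : b ≤ c)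
    (A B Cc X Y : Polynomial ℂ)
    (hA : PR a A)
    (hB : PR b B) (hBdeg : B.natDegree = b) (hB0 : B ≠ 0)
    (hC : PR c Cc)
    (heq : A * X - B * Y = Cc) (hX : X.degree ≤ ((c - a : ℕ) : ℕ)) :
    ∃ X₀ Y₀ : Polynomial ℂ,
      A * X₀ - B * Y₀ = Cc ∧ PR (c - a) X₀ ∧ PR (c - b) Y₀ := by
  obtain ⟨hAdeg, hAfix⟩ := PR_iff_conjReflect_eq.1 hA
  obtain ⟨hBle, hBfix⟩ := PR_iff_conjReflect_eq.1 hB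
  obtain ⟨hCdeg, hCfix⟩ := PR_iff_conjReflect_eq.1 hC
  have hXdeg : X.natDegree ≤ c - a := natDegree_le_iff_degree_le.2 hX
  have hBYdeg : (B * Y).natDegree ≤ c := by
    rw [show B * Y = A * X - Cc by rw [← heq]; ring]
    refine (natDegree_sub_le _ _).trans (max_le ?_ hCdeg)
    exact (natDegree_mul_le).trans (by omega)
  have hYdeg : Y.natDegree ≤ c - b := hBdeg ▸ natDegree_le_sub_of_natDegree_mul_le hB0 hBYdeg
  have hconj := mul_conjReflect_sub_mul_conjReflect hac hbc hAdeg hAfix hBle hBfix hCfix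
    hXdeg hYdeg heq
  have hhalf : C (1 / 2 : ℂ) * 2 = 1 := by rw [← C_ofNat, ← C_mul]; norm_num
  refine ⟨C (1 / 2) * (X + conjReflect (c - a) X), C (1 / 2) * (Y + conjReflect (c - b) Y),
    ?_, PR_half_add_conjReflect hXdeg, PR_half_add_conjReflect hYdeg⟩
  linear_combination C (1 / 2 : ℂ) * (heq + hconj) + Cc * hhalf

/-- if `A ∈ 𝒫^a_ℝ`, `B ∈ 𝒫^b_ℝ`, `C ∈ 𝒫^c_ℝ` and `(X, Y)` solves
`A X − B Y = C` with `deg X ≤ c − a`, then there is a real solution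
`(X₀, Y₀) ∈ 𝒫^{c−a}_ℝ × 𝒫^{c−b}_ℝ`. -/
theorem bezout_real_solution (a b c : ℕ) (hac : a ≤ c) (hbc : b ≤ c)
    (A B Cc X Y : Polynomial ℂ)
    (hA : PR a A) (hAdeg : A.natDegree = a) (hA0 : A ≠ 0)
    (hB : PR b B) (hBdeg : B.natDegree = b) (hB0 : B ≠ 0)
    (hC : PR c Cc)
    (heq : A * X - B * Y = Cc) (hX : X.degree ≤ ((c - a : ℕ) : ℕ)) :
    ∃ X₀ Y₀ : Polynomial ℂ,
      A * X₀ - B * Y₀ = Cc ∧ PR (c - a) X₀ ∧ PR (c - b) Y₀ :=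
  bezout_real_solution_general a b c hac hbc A B Cc X Y hA hB hBdeg hB0 hC heq hX
end

section
/- Let P be a polynomial over ℂ with only simple roots, all nonzero, of degree m ≥ g + 4 where g ≥ 4. If a polynomial c of degree at most g + 3 satisfies 0 = 2P(ζ)(c(ζ) − ζ c'(ζ)) + P'(ζ) ζ c(ζ) for all ζ, then c = 0. -/
open Polynomial

/-! The identity shows `P ∣ P' · X · c`. A squarefree `P` is coprime to `P'`, and `P(0) ≠ 0`
makes it coprime to `X`, so `P ∣ c`; as `deg c < deg P`, this forces `c = 0`. -/

namespace Polynomial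

variable {K : Type*} [Field K]

theorem isCoprime_X_of_eval_zero_ne_zero {P : K[X]} (hP0 : P.eval 0 ≠ 0) : IsCoprime P X := by
  refine (irreducible_X.coprime_iff_not_dvd.mpr fun hX => hP0 ?_).symm
  rwa [← coeff_zero_eq_eval_zero, ← X_dvd_iff]

theorem Separable.dvd_of_dvd_derivative_mul_X_mul {P c : K[X]} (hP : P.Separable)
    (hP0 : P.eval 0 ≠ 0) (h : P ∣ derivative P * X * c) : P ∣ c :=
  (IsCoprime.mul_right hP (isCoprime_X_of_eval_zero_ne_zero hP0)).dvd_of_dvd_mul_left h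

end Polynomial

theorem deformation_polynomial_vanishes_general (g m : ℕ) (hm : g + 4 ≤ m)
    (P c : Polynomial ℂ) (hP : Squarefree P) (hP0 : P.eval 0 ≠ 0)
    (hPdeg : P.natDegree = m) (hc : c.degree ≤ ((g + 3 : ℕ) : ℕ))
    (heq : 0 = 2 * P * (c - X * derivative c) + derivative P * X * c) :
    c = 0 := by
  have hdvd : P ∣ derivative P * X * c :=
    ⟨-(2 * (c - X * derivative c)), by linear_combination -heq⟩
  have hPc : P ∣ c :=
    (PerfectField.separable_iff_squarefree.mpr hP).dvd_of_dvd_derivative_mul_X_mul hP0 hdvd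
  have hcdeg : c.natDegree ≤ g + 3 := natDegree_le_iff_degree_le.mpr hc
  exact eq_zero_of_dvd_of_natDegree_lt hPc (by omega)

/-- if `P` is squarefree of degree `m ≥ g + 4` (with `g ≥ 4`), has no root
at `0`, and a polynomial `c` of degree at most `g + 3` satisfies
`0 = 2P(c − ζ c') + P' ζ c`, then `c = 0`. -/
theorem deformation_polynomial_vanishes (g m : ℕ) (hg : 4 ≤ g) (hm : g + 4 ≤ m)
    (P c : Polynomial ℂ) (hP : Squarefree P) (hP0 : P.eval 0 ≠ 0)
    (hPdeg : P.natDegree = m) (hc : c.degree ≤ ((g + 3 : ℕ) : ℕ))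
    (heq : 0 = 2 * P * (c - X * derivative c) + derivative P * X * c) :
    c = 0 :=
  deformation_polynomial_vanishes_general g m hm P c hP hP0 hPdeg hc heq
end

section
/- Let L be a squarefree complex polynomial. If a complex polynomial c satisfies 0 = 2·ζ·L(ζ)·(c(ζ) − ζ c'(ζ)) + (ζ L(ζ))'·ζ·c(ζ) for all ζ (i.e. the equation with P = ζ·L) and deg c < 2·deg L, then c = 0. -/
/-!
The hypothesis says that `c` solves `a M c + b X M' c = 2 X M c'` for `M = X L`, `a = 2`, `b = 1`;
cancelling a factor `X` of `M` replaces `a` by `a + b`. When `M` is squarefree and prime to `X`,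
it is prime to `X M'`, so `b ≠ 0` forces `M ∣ c`, and the quotient solves the equation with `b - 2`;
two rounds give `M² ∣ c`. At `0` the equation reads `a M(0) c(0) = 0`, and the quotient by `X`
solves it with `a - 2`, which gives `X² ∣ c` as long as `a ∉ {0, 2}`. Hence `L² ∣ c`, incompatible
with the degree bound unless `c = 0`.
-/

open Polynomial

variable {K : Type*} [Field K]

def DeformationEq (M : K[X]) (a b : K) (c : K[X]) : Prop :=
  C a * M * c + C b * X * derivative M * c = 2 * X * M * derivative c

theorem isCoprime_X_mul_derivative_of_squarefree [PerfectField K] {M : K[X]}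
    (hM : Squarefree M) (hX : ¬X ∣ M) : IsCoprime M (X * derivative M) :=
  (irreducible_X.coprime_iff_not_dvd.mpr hX).symm.mul_right
    (PerfectField.separable_iff_squarefree.mpr hM)

namespace DeformationEq

variable {M c d : K[X]} {a b : K}

theorem of_X_mul (h : DeformationEq (X * M) a b c) : DeformationEq M (a + b) b c := by
  unfold DeformationEq at *
  rw [derivative_mul, derivative_X] at h
  apply mul_left_cancel₀ (X_ne_zero (R := K))
  rw [C_add]
  linear_combination h

theorem of_mul_left (hM : M ≠ 0) (h : DeformationEq M a b (M * d)) :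
    DeformationEq M a (b - 2) d := by
  unfold DeformationEq at *
  rw [derivative_mul] at h
  apply mul_left_cancel₀ hM
  rw [C_sub, C_ofNat]
  linear_combination h

theorem of_X_mul_right (h : DeformationEq M a b (X * d)) : DeformationEq M (a - 2) b d := by
  unfold DeformationEq at *
  rw [derivative_mul, derivative_X] at h
  apply mul_left_cancel₀ (X_ne_zero (R := K))
  rw [C_sub, C_ofNat]
  linear_combination h

theorem dvd [PerfectField K] (hM : Squarefree M) (hX : ¬X ∣ M) (hb : b ≠ 0)
    (h : DeformationEq M a b c) : M ∣ c := by
  have hdvd : M ∣ X * derivative M * (C b * c) :=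
    ⟨2 * X * derivative c - C a * c, by unfold DeformationEq at h; linear_combination h⟩
  exact (dvd_C_mul hb).mp
    ((isCoprime_X_mul_derivative_of_squarefree hM hX).dvd_of_dvd_mul_left hdvd)

theorem X_dvd (hX : ¬X ∣ M) (ha : a ≠ 0) (h : DeformationEq M a b c) : X ∣ c := by
  unfold DeformationEq at h
  have h0 := congrArg (eval 0) h
  simp only [eval_add, eval_mul, eval_C, eval_X, eval_ofNat, mul_zero, zero_mul,
    add_zero] at h0
  rw [X_dvd_iff, coeff_zero_eq_eval_zero] at hX ⊢
  simpa [ha, hX] using h0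

theorem sq_dvd [PerfectField K] (hM : Squarefree M) (hX : ¬X ∣ M)
    (h : DeformationEq M a 1 c) : M ^ 2 ∣ c := by
  obtain ⟨d, rfl⟩ := h.dvd hM hX one_ne_zero
  have hd : DeformationEq M a (1 - 2) d := h.of_mul_left hM.ne_zero
  obtain ⟨e, rfl⟩ := hd.dvd hM hX (by norm_num)
  exact ⟨e, by ring⟩

theorem X_sq_dvd (hX : ¬X ∣ M) (ha : a ≠ 0) (ha2 : a - 2 ≠ 0)
    (h : DeformationEq M a b c) : X ^ 2 ∣ c := by
  obtain ⟨d, rfl⟩ := h.X_dvd hX ha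
  obtain ⟨e, rfl⟩ := h.of_X_mul_right.X_dvd hX ha2
  exact ⟨e, by ring⟩

end DeformationEq

/-- for `L` squarefree and `P = ζ L`, if a polynomial `c` satisfies
`0 = 2P(c − ζ c') + P' ζ c` and `deg c < 2 deg L`, then `c = 0`. -/
theorem deformation_polynomial_vanishes_branched (L c : Polynomial ℂ) (hL : Squarefree L)
    (heq : 0 = 2 * (X * L) * (c - X * derivative c) + derivative (X * L) * X * c)
    (hdeg : c.natDegree < 2 * L.natDegree) :
    c = 0 := by
  have hXL : DeformationEq (X * L) 2 1 c := by
    unfold DeformationEq; rw [C_1, C_ofNat]; linear_combination -heq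
  have hL3 : DeformationEq L (2 + 1) 1 c := hXL.of_X_mul
  have hsq : L ^ 2 ∣ c := by
    by_cases hX : X ∣ L
    · obtain ⟨M, rfl⟩ := hX
      have hXM : ¬X ∣ M := fun h => not_isUnit_X (hL X (mul_dvd_mul_left X h))
      have hM : DeformationEq M (2 + 1 + 1) 1 c := hL3.of_X_mul
      rw [mul_pow]
      exact ((irreducible_X.coprime_iff_not_dvd.mpr hXM).pow).mul_dvd
        (hM.X_sq_dvd hXM (by norm_num) (by norm_num))
        (hM.sq_dvd (hL.squarefree_of_dvd (dvd_mul_left M X)) hXM)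
    · exact hL3.sq_dvd hL hX
  by_contra hc
  have hle := natDegree_le_of_dvd hsq hc
  rw [natDegree_pow] at hle
  omega
end

section
/- Let L be a nonzero complex polynomial of degree 2 with simple roots, both nonzero, and let P = ζ·L (so g = 1 in the family P of degree 2g+2 with a root at 0). If c = a·L² for a constant a ∈ ℂ and 0 = 2P(c − ζ c') + P' ζ c, then a = 0. -/
open Polynomial

/-! With `P = ζ L` and `c = a L²` the right-hand side collapses to `3 a ζ L² (L − ζ L')`.
Evaluating at `0` shows `L − ζ L' ≠ 0`, so in the domain `ℂ[X]` only `a` can vanish. -/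

theorem deformation_rhs_eq_of_C_mul_sq {R : Type*} [CommRing R] (L : R[X]) (a : R) :
    2 * (X * L) * (C a * L ^ 2 - X * derivative (C a * L ^ 2)) +
        derivative (X * L) * X * (C a * L ^ 2) =
      3 * C a * X * L ^ 2 * (L - X * derivative L) := by
  simp only [derivative_mul, derivative_C, derivative_X, derivative_sq, map_ofNat]
  ring

theorem sub_X_mul_derivative_ne_zero {R : Type*} [CommRing R] {L : R[X]}
    (hL0 : L.eval 0 ≠ 0) : L - X * derivative L ≠ 0 := fun h => hL0 <| by
  simpa using congrArg (eval 0) h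

theorem deformation_polynomial_vanishes_genus_one_general (L : Polynomial ℂ) (a : ℂ)
    (hL0 : L.eval 0 ≠ 0)
    (heq : 0 = 2 * (X * L) * (C a * L ^ 2 - X * derivative (C a * L ^ 2)) +
        derivative (X * L) * X * (C a * L ^ 2)) :
    a = 0 := by
  rw [deformation_rhs_eq_of_C_mul_sq] at heq
  have hL : L ≠ 0 := fun h => hL0 (by simp [h])
  simpa [hL, sub_X_mul_derivative_ne_zero hL0, X_ne_zero] using heq.symm

/-- for `L` squarefree quadratic with `L(0) ≠ 0` and `P = ζ L` (the genus
one, conformal case), if `c = a L²` satisfies `0 = 2P(c − ζ c') + P' ζ c`, then `a = 0`. -/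
theorem deformation_polynomial_vanishes_genus_one (L : Polynomial ℂ) (a : ℂ)
    (hL : Squarefree L) (hLdeg : L.natDegree = 2) (hL0 : L.eval 0 ≠ 0)
    (heq : 0 = 2 * (X * L) * (C a * L ^ 2 - X * derivative (C a * L ^ 2)) +
        derivative (X * L) * X * (C a * L ^ 2)) :
    a = 0 :=
  deformation_polynomial_vanishes_genus_one_general L a hL0 heq
end

section
/- Let β₁,…,β_{n+1} be distinct nonzero complex numbers whose multiset is invariant under β ↦ 1/conj(β), via an involution τ on indices with β_{τ(i)} = 1/conj(βᵢ). Let f be of the form f(β) = g(β)/h(β) with g ∈ 𝒫^{m}_ℝ and h ∈ 𝒫^{m-n+1}_ℝ nonvanishing at the βᵢ. Then the leading coefficient R = Σᵢ f(βᵢ)·Π_{j≠i}(βᵢ − β_j)^{-1} of the Lagrange interpolant of f at β₁,…,β_{n+1} satisfies conj(R) = (−1)ⁿ (Π_{j=1}^{n+1} β_j) R. -/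
open Polynomial

lemma conj_eval {k : ℕ} {q : Polynomial ℂ} (hq : PR k q) {β : ℂ} (hβ : β ≠ 0) :
    (starRingEnd ℂ) (q.eval β) =
      ((starRingEnd ℂ) β) ^ k * q.eval (((starRingEnd ℂ) β)⁻¹) := by
  have hcβ : (starRingEnd ℂ) β ≠ 0 := by simpa using hβ
  have hnd : q.natDegree < k + 1 := Nat.lt_succ_of_le (natDegree_le_iff_degree_le.mpr hq.1)
  rw [eval_eq_sum_range' hnd, eval_eq_sum_range' hnd, map_sum, Finset.mul_sum]
  refine Finset.sum_nbij' (fun a => k - a) (fun a => k - a) ?_ ?_ ?_ ?_ ?_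
  · intro a ha; simp only [Finset.mem_range] at *; omega
  · intro a ha; simp only [Finset.mem_range] at *; omega
  · intro a ha; simp only [Finset.mem_range] at ha; show k - (k - a) = a; omega
  · intro a ha; simp only [Finset.mem_range] at ha; show k - (k - a) = a; omega
  · intro a ha
    simp only [Finset.mem_range] at ha
    have ha' : a ≤ k := by omega
    show (starRingEnd ℂ) (q.coeff a * β ^ a)
      = (starRingEnd ℂ) β ^ k * (q.coeff (k - a) * ((starRingEnd ℂ) β)⁻¹ ^ (k - a))
    rw [map_mul, map_pow]
    have h1 : (starRingEnd ℂ) (q.coeff a) = q.coeff (k - a) := by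
      rw [hq.2 a ha']; simp
    have h2 : (starRingEnd ℂ) β ^ k * ((starRingEnd ℂ) β)⁻¹ ^ (k - a)
        = (starRingEnd ℂ) β ^ a := by
      rw [inv_pow, ← pow_sub₀ _ hcβ (Nat.sub_le k a)]
      congr 1; omega
    rw [h1]
    linear_combination (-(q.coeff (k - a))) * h2

/-- let `β₁, …, β_{n+1}` be distinct nonzero complex numbers whose set is
invariant under `β ↦ 1/conj β` via an involution `τ` of indices, and let `f = g/h` with
`g ∈ 𝒫^{k₁}_ℝ`, `h ∈ 𝒫^{k₂}_ℝ` (`k₁ = k₂ + n − 1`) and `h` nonvanishing at the `βᵢ`.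
Then the leading coefficient `R = Σᵢ f(βᵢ) Πⱼ≠ᵢ (βᵢ − βⱼ)⁻¹` of the Lagrange interpolant
satisfies `conj R = (−1)ⁿ (Πⱼ βⱼ) R`. -/
theorem reality_of_R (n k₁ k₂ : ℕ) (hdeg : k₁ + 1 = k₂ + n)
    (β : Fin (n + 1) → ℂ) (hβ : Function.Injective β) (hβ0 : ∀ i, β i ≠ 0)
    (τ : Fin (n + 1) → Fin (n + 1)) (hτinv : Function.Involutive τ)
    (hτ : ∀ i, β (τ i) = ((starRingEnd ℂ) (β i))⁻¹)
    (g h : Polynomial ℂ) (hg : PR k₁ g) (hh : PR k₂ h)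
    (hh0 : ∀ i, h.eval (β i) ≠ 0) :
    (starRingEnd ℂ)
        (∑ i, g.eval (β i) / h.eval (β i) * ∏ j ∈ Finset.univ.erase i, (β i - β j)⁻¹)
      = (-1) ^ n * (∏ j, β j) *
        (∑ i, g.eval (β i) / h.eval (β i) * ∏ j ∈ Finset.univ.erase i, (β i - β j)⁻¹) := by
  have hτinj : Function.Injective τ := hτinv.injective
  have hβτ : ∀ i, (starRingEnd ℂ) (β i) = (β (τ i))⁻¹ := fun i => by rw [hτ i, inv_inv]
  set P := ∏ j, β j with hP
  set T : Fin (n+1) → ℂ := fun i =>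
    g.eval (β i) / h.eval (β i) * ∏ j ∈ Finset.univ.erase i, (β i - β j)⁻¹ with hT
  have key : ∀ i, (starRingEnd ℂ) (T i) = (-1)^n * P * T (τ i) := by
    intro i
    set c := β (τ i) with hc
    have hc0 : c ≠ 0 := hβ0 (τ i)
    have hcc : ((starRingEnd ℂ) (β i))⁻¹ = c := by rw [hβτ i, inv_inv]
    have hH0 : h.eval c ≠ 0 := hh0 (τ i)
    -- product reindex
    have step1 : ∏ j ∈ Finset.univ.erase i,
          ((starRingEnd ℂ) (β i) - (starRingEnd ℂ) (β j))⁻¹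
        = ∏ j ∈ Finset.univ.erase (τ i), (c⁻¹ - (β j)⁻¹)⁻¹ := by
      refine Finset.prod_nbij' τ τ ?_ ?_ ?_ ?_ ?_
      · intro a ha
        simp only [Finset.mem_erase, Finset.mem_univ, and_true] at *
        exact fun e => ha (hτinj e)
      · intro a ha
        simp only [Finset.mem_erase, Finset.mem_univ, and_true] at *
        intro e; exact ha (by rw [← hτinv a, e])
      · intro a _; exact hτinv a
      · intro a _; exact hτinv a
      · intro a ha
        rw [hβτ i, hβτ a]
    have step2 : ∀ j ∈ Finset.univ.erase (τ i),
        (c⁻¹ - (β j)⁻¹)⁻¹ = (-1) * c * β j * (c - β j)⁻¹ := by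
      intro j hj
      have hne : c - β j ≠ 0 := sub_ne_zero.mpr fun e =>
        (Finset.mem_erase.mp hj).1 (hβ e.symm)
      have hd : c⁻¹ - (β j)⁻¹ ≠ 0 := by
        intro e
        apply hne
        have := sub_eq_zero.mp e
        rw [inv_eq_iff_eq_inv.mp this, inv_inv] at *
        exact sub_eq_zero.mpr rfl
      rw [inv_sub_inv hc0 (hβ0 j), inv_div, div_eq_mul_inv]
      have hni : (β j - c)⁻¹ = -(c - β j)⁻¹ := by rw [← neg_sub c (β j), ← neg_inv]
      rw [hni]; ring
    have hcard : (Finset.univ.erase (τ i)).card = n := by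
      simp [Finset.card_erase_of_mem]
    have step3 : ∏ j ∈ Finset.univ.erase (τ i), (c⁻¹ - (β j)⁻¹)⁻¹
        = (-1)^n * c^n * (∏ j ∈ Finset.univ.erase (τ i), β j)
          * ∏ j ∈ Finset.univ.erase (τ i), (c - β j)⁻¹ := by
      rw [Finset.prod_congr rfl step2]
      rw [Finset.prod_mul_distrib, Finset.prod_mul_distrib, Finset.prod_mul_distrib,
        Finset.prod_const, Finset.prod_const, hcard]
    have hPB : (∏ j ∈ Finset.univ.erase (τ i), β j) * c = P := by
      rw [hP, hc]
      exact Finset.prod_erase_mul _ _ (Finset.mem_univ (τ i))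
    have hpow : c ^ (k₂ + n) = c ^ (k₁ + 1) := by rw [hdeg]
    simp only [hT]
    rw [map_mul, map_div₀, conj_eval hg (hβ0 i), conj_eval hh (hβ0 i), map_prod]
    simp only [map_inv₀, map_sub]
    rw [step1, step3, hcc, hβτ i]
    set B := ∏ j ∈ Finset.univ.erase (τ i), β j with hB
    set Q := ∏ j ∈ Finset.univ.erase (τ i), (c - β j)⁻¹ with hQ
    have hG := g.eval c
    -- goal: (c⁻¹)^k₁ * g.eval c / ((c⁻¹)^k₂ * h.eval c) * ((-1)^n * c^n * B * Q)
    --     = (-1)^n * P * (g.eval c / h.eval c * Q)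
    rw [← hPB]
    have hck : c ^ k₁ ≠ 0 := pow_ne_zero _ hc0
    have e : (c⁻¹)^k₁ * c^n / (c⁻¹)^k₂ = c := by
      rw [inv_pow, inv_pow, div_eq_mul_inv, inv_inv, mul_assoc, ← pow_add, add_comm n k₂, hpow,
        pow_succ, ← mul_assoc, inv_mul_cancel₀ hck, one_mul]
    calc _ = (c⁻¹)^k₁ * c^n / (c⁻¹)^k₂ * ((-1)^n * B * (g.eval c / h.eval c * Q)) := by ring
      _ = _ := by rw [e]; ring
  calc (starRingEnd ℂ) (∑ i, T i) = ∑ i, (starRingEnd ℂ) (T i) := map_sum _ _ _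
    _ = ∑ i, (-1)^n * P * T (τ i) := Finset.sum_congr rfl fun i _ => key i
    _ = ∑ i, (-1)^n * P * T i := Equiv.sum_comp (hτinv.toPerm τ) (fun i => (-1)^n * P * T i)
    _ = (-1)^n * P * ∑ i, T i := by rw [Finset.mul_sum]
end

section
/- Let α ∈ ℂ with 0 < |α| < 1, set x = −(1 + α·conj(α))/(2α), and for nonzero y ∈ ℂ define the cubic b_y(ζ) = y + x y ζ + conj(x y) ζ² + conj(y) ζ³. If b_y and b_w (for nonzero y, w) share a common root β with 1 + xβ ≠ 0, then y/conj(y) = w/conj(w); consequently b_y and b_w are real-linearly dependent: w = λ y for some λ ∈ ℝ, or w = μ·y with b_w a real scalar multiple of b_y after the identification. Precisely: b_y(β) = 0 implies y/conj(y) = −β²(conj(x) + β)/(1 + xβ), so the ratio y/conj(y) is determined by β, and two such cubics with a common root β are proportional over ℝ. -/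
/-!
Writing `b_y(β) = y (1 + x β) + conj y · β² (conj x + β)`, a root `β` of `b_y` fixes the ratio
`y / conj y` as `-β² (conj x + β) / (1 + x β)`. Two cubics with the common root `β` therefore have
`w · conj y = y · conj w`, i.e. `w / y` is real.
-/

open ComplexConjugate

section StarField

variable {K : Type*} [Field K] [StarRing K]

/-- The paper's `b_y`: the differential is `b_y(ζ) dζ / (ζ² η)`. -/
def selfInversiveCubic (x y ζ : K) : K :=
  y + x * y * ζ + conj (x * y) * ζ ^ 2 + conj y * ζ ^ 3

theorem selfInversiveCubic_eq (x y ζ : K) :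
    selfInversiveCubic x y ζ = y * (1 + x * ζ) + conj y * (ζ ^ 2 * (conj x + ζ)) := by
  rw [selfInversiveCubic, map_mul]
  ring

theorem selfInversiveCubic_eq_zero_iff {x y ζ : K} :
    selfInversiveCubic x y ζ = 0 ↔ y * (1 + x * ζ) = -ζ ^ 2 * (conj x + ζ) * conj y := by
  rw [selfInversiveCubic_eq, add_eq_zero_iff_eq_neg]
  congr! 1
  ring

theorem div_conj_eq_of_selfInversiveCubic_eq_zero {x y β : K} (hy : y ≠ 0)
    (hβ : 1 + x * β ≠ 0) (h : selfInversiveCubic x y β = 0) :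
    y / conj y = -β ^ 2 * (conj x + β) / (1 + x * β) := by
  rw [div_eq_div_iff ((map_ne_zero _).2 hy) hβ]
  exact selfInversiveCubic_eq_zero_iff.1 h

theorem mul_conj_eq_of_common_root {x y w β : K} (hβ : 1 + x * β ≠ 0)
    (hy : selfInversiveCubic x y β = 0) (hw : selfInversiveCubic x w β = 0) :
    w * conj y = y * conj w := by
  have hy' := selfInversiveCubic_eq_zero_iff.1 hy
  have hw' := selfInversiveCubic_eq_zero_iff.1 hw
  refine mul_left_cancel₀ hβ ?_
  linear_combination conj y * hw' - conj w * hy'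

end StarField

theorem Complex.exists_real_mul_of_mul_conj_eq {y w : ℂ} (hy : y ≠ 0)
    (h : w * conj y = y * conj w) : ∃ r : ℝ, w = r * y := by
  have hreal : conj (w / y) = w / y := by
    rw [map_div₀, div_eq_div_iff ((map_ne_zero _).2 hy) hy]
    linear_combination -h
  obtain ⟨r, hr⟩ := Complex.conj_eq_iff_real.1 hreal
  exact ⟨r, by rw [← hr, div_mul_cancel₀ _ hy]⟩

theorem genus_zero_common_root_general (y w β : ℂ) (hy : y ≠ 0)
    (x : ℂ)
    (hβ : 1 + x * β ≠ 0)
    (hyroot : y + x * y * β + (starRingEnd ℂ) (x * y) * β ^ 2 +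
      (starRingEnd ℂ) y * β ^ 3 = 0) :
    y / (starRingEnd ℂ) y = -β ^ 2 * ((starRingEnd ℂ) x + β) / (1 + x * β) ∧
    (w + x * w * β + (starRingEnd ℂ) (x * w) * β ^ 2 +
        (starRingEnd ℂ) w * β ^ 3 = 0 →
      ∃ lam : ℝ, w = (lam : ℂ) * y) :=
  ⟨div_conj_eq_of_selfInversiveCubic_eq_zero hy hβ hyroot, fun hwroot =>
    Complex.exists_real_mul_of_mul_conj_eq hy (mul_conj_eq_of_common_root hβ hyroot hwroot)⟩

/-- genus-zero differentials with a common root are ℝ-linearly dependent.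
With `0 < |α| < 1`, `x = −(1 + α conj α)/(2α)`, and `b_y(ζ) = y + x y ζ + conj(x y) ζ² +
conj(y) ζ³` for `y ≠ 0`: if `b_y(β) = 0` and `1 + x β ≠ 0` then
`y/conj y = −β² (conj x + β)/(1 + x β)`; consequently if also `b_w(β) = 0` for `w ≠ 0`
then `w = λ y` for some real `λ`. -/
theorem genus_zero_common_root (α : ℂ) (hα0 : 0 < ‖α‖)
    (hα1 : ‖α‖ < 1) (y w β : ℂ) (hy : y ≠ 0) (hw : w ≠ 0)
    (x : ℂ) (hx : x = -(1 + α * (starRingEnd ℂ) α) / (2 * α))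
    (hβ : 1 + x * β ≠ 0)
    (hyroot : y + x * y * β + (starRingEnd ℂ) (x * y) * β ^ 2 +
      (starRingEnd ℂ) y * β ^ 3 = 0) :
    y / (starRingEnd ℂ) y = -β ^ 2 * ((starRingEnd ℂ) x + β) / (1 + x * β) ∧
    (w + x * w * β + (starRingEnd ℂ) (x * w) * β ^ 2 +
        (starRingEnd ℂ) w * β ^ 3 = 0 →
      ∃ lam : ℝ, w = (lam : ℂ) * y) :=
  genus_zero_common_root_general y w β hy x hβ hyroot
end

section
/- Let P, b¹, b², Ṗ, ḃ¹, ḃ², ĉ¹, ĉ² be polynomials over ℂ with P₀ = P(0) ≠ 0, satisfying for i = 1,2: (i) the coefficient identities from degrees 0 and 1 of Ṗ bⁱ − 2P ḃⁱ = 2P(ĉⁱ − ζ(ĉⁱ)') + P' ζ ĉⁱ, (ii) the residue condition P₁ b⁰ⁱ − 2P₀ b₁ⁱ = 0 (subscripts denoting coefficients), and (iii) b¹ĉ² − b²ĉ¹ = Q̂ P for some polynomial Q̂. Then the derivative residue condition Ṗ₁ b₀ⁱ + P₁ ḃ₀ⁱ − 2Ṗ₀ b₁ⁱ − 2P₀ ḃ₁ⁱ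 = 0 holds automatically for i = 1, 2. -/
open Polynomial

/-
The degree-0 and degree-1 coefficients of the deformation equation read
`Ṗ₀ b₀ − 2P₀ db₀ = 2P₀ ĉ₀` and `Ṗ₀ b₁ + Ṗ₁ b₀ − 2P₀ db₁ − 2P₁ db₀ = 3P₁ ĉ₀`. Eliminating
`Ṗ₁ b₀ − 2P₀ db₁` with the second one turns the claim into `P₁ (ĉ₀ + db₀) = Ṗ₀ b₁`; multiplied
by `2P₀`, this is the first identity times `P₁` combined with the residue condition
`P₁ b₀ = 2P₀ b₁`. Since `P₀ ≠ 0` we may cancel `2P₀`.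
-/

section Coefficients

variable {R : Type*} [CommRing R] (P Pd b bd c : R[X])

lemma coeff_zero_deformation_lhs :
    (Pd * b - 2 * P * bd).coeff 0 = Pd.coeff 0 * b.coeff 0 - 2 * P.coeff 0 * bd.coeff 0 := by
  simp [mul_assoc]

lemma coeff_one_deformation_lhs :
    (Pd * b - 2 * P * bd).coeff 1 = Pd.coeff 0 * b.coeff 1 + Pd.coeff 1 * b.coeff 0
      - 2 * P.coeff 0 * bd.coeff 1 - 2 * P.coeff 1 * bd.coeff 0 := by
  simp only [coeff_sub, mul_assoc, coeff_ofNat_mul, mul_coeff_one]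
  ring

lemma coeff_zero_deformation_rhs :
    (2 * P * (c - X * derivative c) + derivative P * X * c).coeff 0 =
      2 * P.coeff 0 * c.coeff 0 := by
  simp [mul_assoc]

lemma coeff_one_deformation_rhs :
    (2 * P * (c - X * derivative c) + derivative P * X * c).coeff 1 =
      3 * P.coeff 1 * c.coeff 0 := by
  simp only [coeff_add, mul_assoc, coeff_ofNat_mul, mul_coeff_one, coeff_sub, mul_coeff_zero,
    coeff_X_zero, coeff_X_one, coeff_derivative]
  ring

end Coefficients

lemma derivative_residue_of_coeff_identities {R : Type*} [CommRing R] [IsDomain R]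
    [NeZero (2 : R)] {p₀ p₁ dp₀ dp₁ b₀ b₁ db₀ db₁ c₀ : R} (hp₀ : p₀ ≠ 0)
    (h₀ : dp₀ * b₀ - 2 * p₀ * db₀ = 2 * p₀ * c₀)
    (h₁ : dp₀ * b₁ + dp₁ * b₀ - 2 * p₀ * db₁ - 2 * p₁ * db₀ = 3 * p₁ * c₀)
    (hres : p₁ * b₀ - 2 * p₀ * b₁ = 0) :
    dp₁ * b₀ + p₁ * db₀ - 2 * dp₀ * b₁ - 2 * p₀ * db₁ = 0 := by
  refine (mul_eq_zero.mp ?_).resolve_left (mul_ne_zero two_ne_zero hp₀)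
  linear_combination 2 * p₀ * h₁ - 3 * p₁ * h₀ + 3 * dp₀ * hres

lemma derivative_residue_of_deformation {R : Type*} [CommRing R] [IsDomain R]
    [NeZero (2 : R)] {P Pd b bd c : R[X]} (hP0 : P.coeff 0 ≠ 0)
    (heq0 : (Pd * b - 2 * P * bd).coeff 0 =
      (2 * P * (c - X * derivative c) + derivative P * X * c).coeff 0)
    (heq1 : (Pd * b - 2 * P * bd).coeff 1 =
      (2 * P * (c - X * derivative c) + derivative P * X * c).coeff 1)
    (hres : P.coeff 1 * b.coeff 0 - 2 * P.coeff 0 * b.coeff 1 = 0) :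
    Pd.coeff 1 * b.coeff 0 + P.coeff 1 * bd.coeff 0
      - 2 * Pd.coeff 0 * b.coeff 1 - 2 * P.coeff 0 * bd.coeff 1 = 0 := by
  rw [coeff_zero_deformation_lhs, coeff_zero_deformation_rhs] at heq0
  rw [coeff_one_deformation_lhs, coeff_one_deformation_rhs] at heq1
  exact derivative_residue_of_coeff_identities hP0 heq0 heq1 hres

theorem residue_condition_automatic_general (P Pd b1 b2 bd1 bd2 c1 c2 : Polynomial ℂ)
    (hP0 : P.coeff 0 ≠ 0)
    (heq0_1 : (Pd * b1 - 2 * P * bd1).coeff 0 =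
      (2 * P * (c1 - X * derivative c1) + derivative P * X * c1).coeff 0)
    (heq1_1 : (Pd * b1 - 2 * P * bd1).coeff 1 =
      (2 * P * (c1 - X * derivative c1) + derivative P * X * c1).coeff 1)
    (heq0_2 : (Pd * b2 - 2 * P * bd2).coeff 0 =
      (2 * P * (c2 - X * derivative c2) + derivative P * X * c2).coeff 0)
    (heq1_2 : (Pd * b2 - 2 * P * bd2).coeff 1 =
      (2 * P * (c2 - X * derivative c2) + derivative P * X * c2).coeff 1)
    (hres1 : P.coeff 1 * b1.coeff 0 - 2 * P.coeff 0 * b1.coeff 1 = 0)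
    (hres2 : P.coeff 1 * b2.coeff 0 - 2 * P.coeff 0 * b2.coeff 1 = 0) :
    (Pd.coeff 1 * b1.coeff 0 + P.coeff 1 * bd1.coeff 0
        - 2 * Pd.coeff 0 * b1.coeff 1 - 2 * P.coeff 0 * bd1.coeff 1 = 0) ∧
    (Pd.coeff 1 * b2.coeff 0 + P.coeff 1 * bd2.coeff 0
        - 2 * Pd.coeff 0 * b2.coeff 1 - 2 * P.coeff 0 * bd2.coeff 1 = 0) :=
  ⟨derivative_residue_of_deformation hP0 heq0_1 heq1_1 hres1,
    derivative_residue_of_deformation hP0 heq0_2 heq1_2 hres2⟩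

/-- in the nonconformal case (`P₀ ≠ 0`), the differentiated residue
condition `Ṗ₁ b₀ⁱ + P₁ ḃ₀ⁱ − 2Ṗ₀ b₁ⁱ − 2P₀ ḃ₁ⁱ = 0` holds automatically, given the
degree-0 and degree-1 coefficient identities of the deformation equations
`Ṗ bⁱ − 2P ḃⁱ = 2P(ĉⁱ − ζ (ĉⁱ)') + P' ζ ĉⁱ`, the residue conditions
`P₁ b₀ⁱ − 2P₀ b₁ⁱ = 0`, and `b¹ ĉ² − b² ĉ¹ = Q̂ P`. -/
theorem residue_condition_automatic (P Pd b1 b2 bd1 bd2 c1 c2 Qh : Polynomial ℂ)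
    (hP0 : P.coeff 0 ≠ 0)
    (heq0_1 : (Pd * b1 - 2 * P * bd1).coeff 0 =
      (2 * P * (c1 - X * derivative c1) + derivative P * X * c1).coeff 0)
    (heq1_1 : (Pd * b1 - 2 * P * bd1).coeff 1 =
      (2 * P * (c1 - X * derivative c1) + derivative P * X * c1).coeff 1)
    (heq0_2 : (Pd * b2 - 2 * P * bd2).coeff 0 =
      (2 * P * (c2 - X * derivative c2) + derivative P * X * c2).coeff 0)
    (heq1_2 : (Pd * b2 - 2 * P * bd2).coeff 1 =
      (2 * P * (c2 - X * derivative c2) + derivative P * X * c2).coeff 1)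
    (hres1 : P.coeff 1 * b1.coeff 0 - 2 * P.coeff 0 * b1.coeff 1 = 0)
    (hres2 : P.coeff 1 * b2.coeff 0 - 2 * P.coeff 0 * b2.coeff 1 = 0)
    (hQ : b1 * c2 - b2 * c1 = Qh * P) :
    (Pd.coeff 1 * b1.coeff 0 + P.coeff 1 * bd1.coeff 0
        - 2 * Pd.coeff 0 * b1.coeff 1 - 2 * P.coeff 0 * bd1.coeff 1 = 0) ∧
    (Pd.coeff 1 * b2.coeff 0 + P.coeff 1 * bd2.coeff 0
        - 2 * Pd.coeff 0 * b2.coeff 1 - 2 * P.coeff 0 * bd2.coeff 1 = 0) :=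
  residue_condition_automatic_general P Pd b1 b2 bd1 bd2 c1 c2 hP0 heq0_1 heq1_1 heq0_2 heq1_2 hres1
    hres2
end

section
/- Let P, b¹, b², Ṗ, ḃ¹, ḃ², ĉ¹, ĉ², Q be complex polynomials with P(0) = 0, P₁ = P'(0) ≠ 0, and b₀¹ = b₀² = 0 (constant coefficients vanish), satisfying for i = 1,2: the degree-1 coefficient identity of Ṗ bⁱ − 2P ḃⁱ = 2P(ĉⁱ − ζ(ĉⁱ)') + P' ζ ĉⁱ, the differentiated residue condition P₁ ḃ₀ⁱ − 2 Ṗ₀ b₁ⁱ = 0, and b¹ĉ² − b²ĉ¹ = Q·P. Then Q₀·(P₁)² = 0, hence Q(0) = 0. -/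
open Polynomial

/-
With `P₀ = 0` and `bⁱ₀ = 0`, the linear coefficient of the deformation equation reads
`Ṗ₀ b₁ⁱ − 2 P₁ ḃ₀ⁱ = 3 P₁ ĉ₀ⁱ`; the residue condition eliminates `ḃ₀ⁱ` and leaves
`P₁ ĉ₀ⁱ = −Ṗ₀ b₁ⁱ`. The linear coefficient of `b¹ĉ² − b²ĉ¹ = QP` is `b₁¹ ĉ₀² − b₁² ĉ₀¹ = Q₀ P₁`;
multiplying by `P₁` and substituting gives `Q₀ P₁² = −Ṗ₀ (b₁¹ b₁² − b₁² b₁¹) = 0`.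
-/

namespace Polynomial

section CommRing

variable {R : Type*} [CommRing R]

theorem coeff_mul_one (p q : R[X]) :
    (p * q).coeff 1 = p.coeff 0 * q.coeff 1 + p.coeff 1 * q.coeff 0 := by
  simp [coeff_mul, Finset.Nat.antidiagonal_succ]

theorem coeff_mul_one_of_coeff_zero_eq_zero {p : R[X]} (hp : p.coeff 0 = 0) (q : R[X]) :
    (p * q).coeff 1 = p.coeff 1 * q.coeff 0 := by
  rw [coeff_mul_one, hp, zero_mul, zero_add]

theorem coeff_one_deformation_lhs {P b : R[X]} (hP0 : P.coeff 0 = 0) (hb : b.coeff 0 = 0)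
    (Pd bd : R[X]) :
    (Pd * b - 2 * P * bd).coeff 1 = Pd.coeff 0 * b.coeff 1 - 2 * P.coeff 1 * bd.coeff 0 := by
  simp only [coeff_sub, coeff_mul_one, hP0, hb, mul_assoc, coeff_ofNat_mul]
  ring

theorem coeff_one_deformation_rhs {P : R[X]} (hP0 : P.coeff 0 = 0) (c : R[X]) :
    (2 * P * (c - X * derivative c) + derivative P * X * c).coeff 1 =
      3 * P.coeff 1 * c.coeff 0 := by
  simp only [coeff_add, mul_assoc, coeff_ofNat_mul, coeff_mul_one, hP0, coeff_sub,
    coeff_derivative, mul_coeff_zero, coeff_X_zero, coeff_X_one, Nat.cast_zero, Nat.cast_one]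
  ring

end CommRing

variable {K : Type*} [Field K] [CharZero K]

theorem coeff_one_mul_coeff_zero_of_deformation {P Pd b bd c : K[X]}
    (hP0 : P.coeff 0 = 0) (hb : b.coeff 0 = 0)
    (heq : (Pd * b - 2 * P * bd).coeff 1 =
      (2 * P * (c - X * derivative c) + derivative P * X * c).coeff 1)
    (hres : P.coeff 1 * bd.coeff 0 - 2 * Pd.coeff 0 * b.coeff 1 = 0) :
    P.coeff 1 * c.coeff 0 = -(Pd.coeff 0 * b.coeff 1) := by
  rw [coeff_one_deformation_lhs hP0 hb, coeff_one_deformation_rhs hP0] at heq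
  linear_combination (-(heq + 2 * hres)) / 3

end Polynomial

/-- in the conformal case (`P₀ = 0`, `P₁ ≠ 0`, `b₀¹ = b₀² = 0`), the
degree-1 coefficient identities of the deformation equations, the differentiated residue
conditions `P₁ ḃ₀ⁱ − 2Ṗ₀ b₁ⁱ = 0`, and `b¹ ĉ² − b² ĉ¹ = Q P` force `Q₀ (P₁)² = 0`,
hence `Q(0) = 0`. -/
theorem conformal_Q_constant_vanishes (P Pd b1 b2 bd1 bd2 c1 c2 Q : Polynomial ℂ)
    (hP0 : P.coeff 0 = 0) (hP1 : P.coeff 1 ≠ 0)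
    (hb1 : b1.coeff 0 = 0) (hb2 : b2.coeff 0 = 0)
    (heq1 : (Pd * b1 - 2 * P * bd1).coeff 1 =
      (2 * P * (c1 - X * derivative c1) + derivative P * X * c1).coeff 1)
    (heq2 : (Pd * b2 - 2 * P * bd2).coeff 1 =
      (2 * P * (c2 - X * derivative c2) + derivative P * X * c2).coeff 1)
    (hres1 : P.coeff 1 * bd1.coeff 0 - 2 * Pd.coeff 0 * b1.coeff 1 = 0)
    (hres2 : P.coeff 1 * bd2.coeff 0 - 2 * Pd.coeff 0 * b2.coeff 1 = 0)
    (hQ : b1 * c2 - b2 * c1 = Q * P) :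
    Q.coeff 0 * P.coeff 1 ^ 2 = 0 ∧ Q.coeff 0 = 0 := by
  have hc1 := coeff_one_mul_coeff_zero_of_deformation hP0 hb1 heq1 hres1
  have hc2 := coeff_one_mul_coeff_zero_of_deformation hP0 hb2 heq2 hres2
  have hQ1 : b1.coeff 1 * c2.coeff 0 - b2.coeff 1 * c1.coeff 0 = Q.coeff 0 * P.coeff 1 := by
    simpa only [coeff_sub, coeff_mul_one_of_coeff_zero_eq_zero hb1,
      coeff_mul_one_of_coeff_zero_eq_zero hb2, coeff_mul_one, hP0, mul_zero, add_zero]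
      using congrArg (coeff · 1) hQ
  have hQP : Q.coeff 0 * P.coeff 1 ^ 2 = 0 := by
    linear_combination -(P.coeff 1 * hQ1) + b1.coeff 1 * hc2 - b2.coeff 1 * hc1
  exact ⟨hQP, (mul_eq_zero.mp hQP).resolve_right (pow_ne_zero 2 hP1)⟩
end
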